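/- Let D be an integral domain with quotient field K and let v_D be the v-operation of D. Then ▲^{v_D} ≤ ▲^{v_D}_D = v_{D[X]}; moreover, ▲^{v_D} = v_{D[X]} if and only if D = K (i.e., D is a field). -/

import Mathlib

/- Preliminaries: semistar operations on an integral domain `R` with quotient field `F`
(submodules of `F` over `R`), polynomial extension of semistar operations from `D`
to `D[X]` (viewed inside the quotient field `K(X) = RatFunc K` of `D[X]`). -/

open Polynomial Pointwise

set_option synthInstance.maxHeartbeats 1000000
set_option maxHeartbeats 1000000

open scoped Classical

noncomputable section

section Generic

variable (R F : Type*) [CommRing R] [Field F] [Algebra R F]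

/-- `o` is a semistar operation of `R` (on the nonzero `R`-submodules of the
quotient field `F`). -/
def IsSemistarOp (o : Submodule R F → Submodule R F) : Prop :=
  (∀ x : F, x ≠ 0 → ∀ E : Submodule R F, E ≠ ⊥ → o (x • E) = x • o E) ∧
  (∀ E G : Submodule R F, E ≠ ⊥ → G ≠ ⊥ → E ≤ G → o E ≤ o G) ∧
  (∀ E : Submodule R F, E ≠ ⊥ → E ≤ o E) ∧
  (∀ E : Submodule R F, E ≠ ⊥ → o (o E) = o E)

/-- The finite-type operation `⋆_f` associated to `⋆`:
`E^{⋆_f} = ⋃ { G^⋆ : G nonzero finitely generated, G ⊆ E }`. -/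
def finTypeFun (o : Submodule R F → Submodule R F) : Submodule R F → Submodule R F :=
  fun E => ⨆ (G : Submodule R F) (_ : G ≠ ⊥) (_ : G.FG) (_ : G ≤ E), o G

/-- `⋆` is of finite type, i.e. `⋆ = ⋆_f`. -/
def IsFiniteTypeFun (o : Submodule R F → Submodule R F) : Prop :=
  ∀ E : Submodule R F, E ≠ ⊥ → o E = finTypeFun R F o E

/-- `⋆` is stable: `(E ∩ G)^⋆ = E^⋆ ∩ G^⋆`. -/
def IsStableFun (o : Submodule R F → Submodule R F) : Prop :=
  ∀ E G : Submodule R F, E ≠ ⊥ → G ≠ ⊥ → o (E ⊓ G) = o E ⊓ o G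

/-- An ideal of `R` viewed as an `R`-submodule of `F`. -/
def idealSub (J : Ideal R) : Submodule R F := Submodule.map (Algebra.linearMap R F) J

/-- `(E : J) = { x ∈ F : xJ ⊆ E }` for an ideal `J` of `R`. -/
def colonIdeal (E : Submodule R F) (J : Ideal R) : Submodule R F where
  carrier := { x : F | ∀ a ∈ J, a • x ∈ E }
  add_mem' := fun {x y} hx hy a ha => by
    simpa [smul_add] using E.add_mem (hx a ha) (hy a ha)
  zero_mem' := fun a _ => by simpa using E.zero_mem
  smul_mem' := fun r x hx a ha => by
    rw [← mul_smul, mul_comm, mul_smul]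
    exact E.smul_mem r (hx a ha)

/-- The stable finite-type operation `tilde ⋆` associated to `⋆`:
`E^{tilde ⋆} = ⋃ { (E : J) : J nonzero finitely generated integral ideal with J^⋆ = R^⋆ }`. -/
def tildeFun (o : Submodule R F → Submodule R F) : Submodule R F → Submodule R F :=
  fun E => ⨆ (J : Ideal R) (_ : J ≠ ⊥) (_ : J.FG)
    (_ : o (idealSub R F J) = o (1 : Submodule R F)), colonIdeal R F E J

/-- The `v`-operation: `E^v = (R : (R : E))` for `E` a nonzero fractional ideal,
and `E^v = F` otherwise. -/
def vFun : Submodule R F → Submodule R F := fun E =>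
  if ∃ d : R, d ≠ 0 ∧ ∀ x ∈ E, d • x ∈ (1 : Submodule R F) then
    (1 : Submodule R F) / ((1 : Submodule R F) / E)
  else ⊤

/-- The `eab` operation `⋆_a` associated to `⋆`. -/
def aFun (o : Submodule R F → Submodule R F) : Submodule R F → Submodule R F := fun E =>
  ⨆ (G : Submodule R F) (_ : G ≠ ⊥) (_ : G.FG) (_ : G ≤ E),
    ⨆ (H : Submodule R F) (_ : H ≠ ⊥) (_ : H.FG), o (G * H) / o H

/-- `I` is a quasi-`⋆`-ideal: a nonzero integral ideal with `I^⋆ ∩ R = I`. -/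
def isQuasiIdealFun (o : Submodule R F → Submodule R F) (I : Ideal R) : Prop :=
  I ≠ ⊥ ∧ (o (idealSub R F I)).comap (Algebra.linearMap R F) = I

/-- `I` is a quasi-`⋆`-maximal ideal: maximal among proper quasi-`⋆`-ideals. -/
def isQuasiMaximalFun (o : Submodule R F → Submodule R F) (I : Ideal R) : Prop :=
  isQuasiIdealFun R F o I ∧ I ≠ ⊤ ∧
    ∀ J : Ideal R, isQuasiIdealFun R F o J → J ≠ ⊤ → I ≤ J → I = J

/-- The `v`-operation relative to an overring `R'` (an `R`-submodule of `F`):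
`B ↦ (R' : (R' : B))` for `B` a nonzero fractional ideal of `R'`, `F` otherwise. -/
def vRelFun (R' B : Submodule R F) : Submodule R F :=
  if ∃ z ∈ R', z ≠ 0 ∧ ∀ x ∈ B, z * x ∈ R' then R' / (R' / B) else ⊤

/-- The `t`-operation relative to an overring `R'`: finite-type operation associated to
the `v`-operation of `R'` (the union being over nonzero finitely generated
`R'`-submodules contained in `B`). -/
def tRelFun (R' B : Submodule R F) : Submodule R F :=
  ⨆ (G : Submodule R F) (_ : G ≠ ⊥)
    (_ : ∃ S : Finset F, G = R' * Submodule.span R (S : Set F)) (_ : G ≤ B),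
    vRelFun R F R' G

end Generic

section Poly

variable (D K : Type*) [CommRing D] [IsDomain D] [Field K] [Algebra D K] [IsFractionRing D K]

/-- The canonical ring homomorphism `D[X] → K(X)`. -/
def polyToRF : Polynomial D →+* RatFunc K :=
  (algebraMap (Polynomial K) (RatFunc K)).comp (Polynomial.mapRingHom (algebraMap D K))

/-- `K(X)` is an algebra over `D[X]`; in fact it is the quotient field of `D[X]`. -/
instance (priority := 100) : Algebra (Polynomial D) (RatFunc K) := (polyToRF D K).toAlgebra

/-- For a `D`-submodule `E` of `K`, the `D[X]`-submodule `E[X]` of `K(X)`: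
polynomials all of whose coefficients lie in `E`. -/
def polyExt (E : Submodule D K) : Submodule (Polynomial D) (RatFunc K) where
  carrier := { f : RatFunc K | ∃ p : Polynomial K, (∀ n, p.coeff n ∈ E) ∧
      f = algebraMap (Polynomial K) (RatFunc K) p }
  add_mem' := by
    rintro f g ⟨p, hp, rfl⟩ ⟨q, hq, rfl⟩
    exact ⟨p + q, fun n => by simpa using E.add_mem (hp n) (hq n), by simp⟩
  zero_mem' := ⟨0, fun n => by simpa using E.zero_mem, by simp⟩
  smul_mem' := by
    rintro c f ⟨p, hp, rfl⟩
    refine ⟨Polynomial.map (algebraMap D K) c * p, fun n => ?_, ?_⟩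
    · rw [Polynomial.coeff_mul]
      refine Submodule.sum_mem E fun ij _ => ?_
      rw [Polynomial.coeff_map, ← Algebra.smul_def]
      exact E.smul_mem _ (hp ij.2)
    · rw [Algebra.smul_def, RingHom.algebraMap_toAlgebra, map_mul]
      unfold polyToRF
      simp

/-- The contraction `B ∩ K` of a `D[X]`-submodule `B` of `K(X)` to a `D`-submodule of `K`. -/
def contractToBase (B : Submodule (Polynomial D) (RatFunc K)) : Submodule D K where
  carrier := { x : K | algebraMap K (RatFunc K) x ∈ B }
  add_mem' := fun {x y} hx hy => by
    simpa [Set.mem_setOf_eq, map_add] using B.add_mem hx hy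
  zero_mem' := by simpa using B.zero_mem
  smul_mem' := fun d x hx => by
    have h : algebraMap K (RatFunc K) (d • x)
        = (Polynomial.C d : Polynomial D) • (algebraMap K (RatFunc K) x) := by
      rw [Algebra.smul_def d x, map_mul, Algebra.smul_def, RingHom.algebraMap_toAlgebra]
      unfold polyToRF
      simp only [RingHom.coe_comp, Function.comp_apply, Polynomial.coe_mapRingHom,
        Polynomial.map_C, RatFunc.algebraMap_C, RatFunc.algebraMap_eq_C]
    show algebraMap K (RatFunc K) (d • x) ∈ B
    rw [h]
    exact B.smul_mem (Polynomial.C d) hx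

/-- The content `c_D(S)`: the `D`-submodule of `K` generated by the coefficients of all
polynomials belonging to `S`. -/
def contentOf (S : Set (RatFunc K)) : Submodule D K :=
  Submodule.span D { x : K | ∃ p : Polynomial K,
    algebraMap (Polynomial K) (RatFunc K) p ∈ S ∧ ∃ n, p.coeff n = x }

/-- The semistar operation `▲^⋆_T` of `D[X]` associated to a semistar operation `⋆` of `D`
and an overring `T` of `D`:
`A ↦ ⋂ { z⁻¹ (c_D(zA))^⋆[X] : z ∈ (T[X] : A), z ≠ 0 }` if `(T[X] : A) ≠ 0`, else `A ↦ K(X)`. -/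
def bigTriT (o : Submodule D K → Submodule D K) (T : Subalgebra D K) :
    Submodule (Polynomial D) (RatFunc K) → Submodule (Polynomial D) (RatFunc K) := fun A =>
  if ∃ z : RatFunc K, z ≠ 0 ∧ ∀ a ∈ A, z * a ∈ polyExt D K (Subalgebra.toSubmodule T) then
    ⨅ (z : RatFunc K) (_ : z ≠ 0) (_ : ∀ a ∈ A, z * a ∈ polyExt D K (Subalgebra.toSubmodule T)),
      z⁻¹ • polyExt D K (o (contentOf D K (z • (A : Set (RatFunc K)))))
  else ⊤

/-- `▲^⋆ := ▲^⋆_K`, the largest strict extension of `⋆` to `D[X]`. -/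
def bigTri (o : Submodule D K → Submodule D K) :
    Submodule (Polynomial D) (RatFunc K) → Submodule (Polynomial D) (RatFunc K) :=
  bigTriT D K o ⊤

/-- `b` is an extension of `⋆` to `D[X]` : `E^⋆ = (E[X])^b ∩ K`. -/
def IsExtensionFun (o : Submodule D K → Submodule D K)
    (b : Submodule (Polynomial D) (RatFunc K) → Submodule (Polynomial D) (RatFunc K)) : Prop :=
  ∀ E : Submodule D K, E ≠ ⊥ → o E = contractToBase D K (b (polyExt D K E))

/-- `b` is a strict extension of `⋆` to `D[X]` : `(E[X])^b = E^⋆[X]`. -/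
def IsStrictExtensionFun (o : Submodule D K → Submodule D K)
    (b : Submodule (Polynomial D) (RatFunc K) → Submodule (Polynomial D) (RatFunc K)) : Prop :=
  ∀ E : Submodule D K, E ≠ ⊥ → b (polyExt D K E) = polyExt D K (o E)

/-- `⋏^⋆ : A ↦ ⋂ { A^★ : ★ a semistar operation of D[X] extending ⋆ }`. -/
def curlyFun (o : Submodule D K → Submodule D K) :
    Submodule (Polynomial D) (RatFunc K) → Submodule (Polynomial D) (RatFunc K) := fun A =>
  ⨅ (b : Submodule (Polynomial D) (RatFunc K) → Submodule (Polynomial D) (RatFunc K))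
    (_ : IsSemistarOp (Polynomial D) (RatFunc K) b) (_ : IsExtensionFun D K o b), b A

/-- The localization `D_Q` of `D` at a prime ideal `Q`, as a `D`-submodule of `K`. -/
def locSub (Q : Ideal D) : Submodule D K :=
  Submodule.span D { x : K | ∃ s : D, s ∉ Q ∧ s • x ∈ (1 : Submodule D K) }

/-- The content of an ideal `I` of `D[X]`: the `D`-submodule of `K` generated by the
coefficients of the polynomials in `I`. -/
def contentOfIdeal (I : Ideal (Polynomial D)) : Submodule D K :=
  Submodule.span D { x : K | ∃ p ∈ I, ∃ n, algebraMap D K (Polynomial.coeff p n) = x }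

/-- The Nagata ring `D_Q(X)`, as a subset of `K(X)`: fractions `f/g` with
`f, g ∈ D_Q[X]` and the coefficients of `g` generating the unit ideal of `D_Q`. -/
def nagataSet (Q : Ideal D) : Set (RatFunc K) :=
  { u : RatFunc K | ∃ g : Polynomial K, (∀ n, g.coeff n ∈ locSub D K Q) ∧
      locSub D K Q * Submodule.span D { x : K | ∃ n, g.coeff n = x } = locSub D K Q ∧
      u * algebraMap (Polynomial K) (RatFunc K) g ∈ polyExt D K (locSub D K Q) }

end Poly

/-! Enlarging `T` enlarges the index set `(T[X] : A)` of the intersection, whence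
`▲^{v_D} ≤ ▲^{v_D}_D`. For `T = D` each term `z⁻¹ (c_D(zA))^{v_D}[X]` with `z ∈ (D[X] : A)`
contains `(D[X] : (D[X] : A))`, because multiplying `zA ⊆ D[X]` by `u ∈ (D : c_D(zA))` acts
coefficientwise; conversely `(c_D(zA))^{v_D}[X] ⊆ D[X]`. For `A = K[X]`, a nonzero polynomial in
`(D[X] : K[X])` forces `D = K` by looking at one nonzero coefficient; otherwise
`v_{D[X]}(K[X]) = K(X)`, while `▲^{v_D}(K[X]) ⊆ (c_D(K[X]))^{v_D}[X]` misses `X⁻¹`. -/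

section VOperation

variable {R F : Type*} [CommRing R] [Nontrivial R] [Field F] [Algebra R F]

theorem vFun_of_le_one {E : Submodule R F} (hE : E ≤ 1) : vFun R F E = 1 / (1 / E) :=
  if_pos ⟨1, one_ne_zero, fun x hx => by simpa using hE hx⟩

theorem vFun_le_one {E : Submodule R F} (hE : E ≤ 1) : vFun R F E ≤ 1 := by
  rw [vFun_of_le_one hE]
  intro y hy
  simpa using Submodule.mem_div_iff_forall_mul_mem.mp hy 1 (Submodule.one_mem_div.mpr hE)

end VOperation

section PolynomialExtension

variable {D K : Type*} [CommRing D] [Field K] [Algebra D K]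

theorem algebraMap_polynomial_apply (p : D[X]) :
    algebraMap D[X] (RatFunc K) p = algebraMap K[X] (RatFunc K) (p.map (algebraMap D K)) :=
  rfl

theorem mem_inv_smul_iff {z w : RatFunc K} (hz : z ≠ 0) (M : Submodule D[X] (RatFunc K)) :
    w ∈ z⁻¹ • M ↔ z * w ∈ M := by
  rw [← SetLike.mem_coe, Submodule.coe_pointwise_smul, Set.mem_inv_smul_set_iff₀ hz]
  rfl

theorem polyExt_mono {E G : Submodule D K} (h : E ≤ G) : polyExt D K E ≤ polyExt D K G := by
  rintro f ⟨p, hp, rfl⟩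
  exact ⟨p, fun n => h (hp n), rfl⟩

theorem coeff_mem_of_mem_polyExt {E : Submodule D K} {p : K[X]}
    (hp : algebraMap K[X] (RatFunc K) p ∈ polyExt D K E) (n : ℕ) : p.coeff n ∈ E := by
  obtain ⟨q, hq, hpq⟩ := hp
  rw [RatFunc.algebraMap_injective K hpq]
  exact hq n

theorem polyExt_one : polyExt D K 1 = (1 : Submodule D[X] (RatFunc K)) := by
  ext f
  rw [Submodule.mem_one]
  constructor
  · rintro ⟨p, hp, rfl⟩
    have hlifts : p ∈ lifts (algebraMap D K) :=
      (lifts_iff_coeff_lifts p).mpr fun n => Submodule.mem_one.mp (hp n)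
    obtain ⟨q, rfl⟩ := (mem_lifts p).mp hlifts
    exact ⟨q, rfl⟩
  · rintro ⟨q, rfl⟩
    exact ⟨q.map (algebraMap D K), fun n => by
      rw [coeff_map]; exact Submodule.mem_one.mpr ⟨q.coeff n, rfl⟩, rfl⟩

theorem polyExt_toSubmodule_bot :
    polyExt D K (Subalgebra.toSubmodule ⊥) = (1 : Submodule D[X] (RatFunc K)) := by
  rw [Algebra.toSubmodule_bot, polyExt_one]

theorem coeff_mem_contentOf {S : Set (RatFunc K)} {p : K[X]}
    (hp : algebraMap K[X] (RatFunc K) p ∈ S) (n : ℕ) : p.coeff n ∈ contentOf D K S :=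
  Submodule.subset_span ⟨p, hp, n, rfl⟩

theorem contentOf_le {S : Set (RatFunc K)} {E : Submodule D K} (hS : S ⊆ polyExt D K E) :
    contentOf D K S ≤ E := by
  rw [contentOf, Submodule.span_le]
  rintro x ⟨p, hp, n, rfl⟩
  exact coeff_mem_of_mem_polyExt (hS hp) n

theorem contentOf_smul_le_one {A : Submodule D[X] (RatFunc K)} {z : RatFunc K} (hz : z ∈ 1 / A) :
    contentOf D K (z • (A : Set (RatFunc K))) ≤ 1 := by
  refine contentOf_le ?_
  rintro _ ⟨a, ha, rfl⟩
  rw [polyExt_one]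
  exact Submodule.mem_div_iff_forall_mul_mem.mp hz a ha

theorem algebraMap_mul_mem_one_div {A : Submodule D[X] (RatFunc K)} {z : RatFunc K}
    (hz : z ∈ 1 / A) {u : K} (hu : u ∈ 1 / contentOf D K (z • (A : Set (RatFunc K)))) :
    algebraMap K (RatFunc K) u * z ∈ 1 / A := by
  refine Submodule.mem_div_iff_forall_mul_mem.mpr fun a ha => ?_
  have hza : z * a ∈ polyExt D K 1 := by
    rw [polyExt_one]
    exact Submodule.mem_div_iff_forall_mul_mem.mp hz a ha
  obtain ⟨p, -, hp⟩ := hza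
  rw [← polyExt_one]
  refine ⟨C u * p, fun n => ?_, ?_⟩
  · rw [coeff_C_mul]
    exact Submodule.mem_div_iff_forall_mul_mem.mp hu _
      (coeff_mem_contentOf (hp ▸ Set.smul_mem_smul_set ha) n)
  · rw [map_mul, RatFunc.algebraMap_C, ← hp, RatFunc.algebraMap_eq_C, mul_assoc]

theorem bigTriT_le_inv_smul (o : Submodule D K → Submodule D K) (T : Subalgebra D K)
    {A : Submodule D[X] (RatFunc K)} {z : RatFunc K} (hz : z ≠ 0)
    (hzA : ∀ a ∈ A, z * a ∈ polyExt D K (Subalgebra.toSubmodule T)) :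
    bigTriT D K o T A ≤ z⁻¹ • polyExt D K (o (contentOf D K (z • (A : Set (RatFunc K))))) := by
  rw [bigTriT, if_pos ⟨z, hz, hzA⟩]
  exact iInf_le_of_le z (iInf_le_of_le hz (iInf_le _ hzA))

theorem bigTriT_antitone (o : Submodule D K → Submodule D K) {T T' : Subalgebra D K}
    (hT : T ≤ T') (A : Submodule D[X] (RatFunc K)) : bigTriT D K o T' A ≤ bigTriT D K o T A := by
  have hmono : polyExt D K (Subalgebra.toSubmodule T) ≤ polyExt D K (Subalgebra.toSubmodule T') :=
    polyExt_mono fun _ hx => hT hx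
  conv_rhs => rw [bigTriT]
  split_ifs
  · exact le_iInf fun z => le_iInf fun hz => le_iInf fun hzA =>
      bigTriT_le_inv_smul o T' hz fun a ha => hmono (hzA a ha)
  · exact le_top

theorem bigTriT_bot_vFun_le_one_div_one_div [Nontrivial D] (A : Submodule D[X] (RatFunc K)) :
    bigTriT D K (vFun D K) ⊥ A ≤ 1 / (1 / A) := by
  intro w hw
  refine Submodule.mem_div_iff_forall_mul_mem.mpr fun u hu => ?_
  rcases eq_or_ne u 0 with rfl | hu0
  · rw [mul_zero]
    exact zero_mem _
  have huA : ∀ a ∈ A, u * a ∈ polyExt D K (Subalgebra.toSubmodule ⊥) := by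
    rw [polyExt_toSubmodule_bot]
    exact Submodule.mem_div_iff_forall_mul_mem.mp hu
  have huw := (mem_inv_smul_iff hu0 _).mp (bigTriT_le_inv_smul _ ⊥ hu0 huA hw)
  rw [mul_comm, ← polyExt_one]
  exact polyExt_mono (vFun_le_one (contentOf_smul_le_one hu)) huw

theorem one_div_one_div_le_bigTriT_bot_vFun [Nontrivial D] (A : Submodule D[X] (RatFunc K)) :
    1 / (1 / A) ≤ bigTriT D K (vFun D K) ⊥ A := by
  rw [bigTriT]
  split_ifs
  · refine le_iInf fun z => le_iInf fun hz => le_iInf fun hzA w hw => ?_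
    rw [polyExt_toSubmodule_bot] at hzA
    have hzA' : z ∈ 1 / A := Submodule.mem_div_iff_forall_mul_mem.mpr hzA
    have hzw : z * w ∈ polyExt D K 1 := by
      rw [polyExt_one, mul_comm]
      exact Submodule.mem_div_iff_forall_mul_mem.mp hw z hzA'
    obtain ⟨q, -, hq⟩ := hzw
    rw [mem_inv_smul_iff hz]
    refine ⟨q, fun n => ?_, hq⟩
    rw [vFun_of_le_one (contentOf_smul_le_one hzA'), Submodule.mem_div_iff_forall_mul_mem]
    intro u hu
    have huqw : algebraMap K[X] (RatFunc K) (C u * q) ∈ polyExt D K 1 := by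
      rw [polyExt_one, map_mul, RatFunc.algebraMap_C, ← hq, ← RatFunc.algebraMap_eq_C]
      convert Submodule.mem_div_iff_forall_mul_mem.mp hw _ (algebraMap_mul_mem_one_div hzA' hu)
        using 1
      ring
    simpa [coeff_C_mul, mul_comm] using coeff_mem_of_mem_polyExt huqw n
  · exact le_top

theorem polyExt_top_ne_bot : polyExt D K ⊤ ≠ ⊥ :=
  (Submodule.ne_bot_iff _).mpr ⟨1, ⟨1, fun _ => trivial, (map_one _).symm⟩, one_ne_zero⟩

theorem inv_X_notMem_polyExt (E : Submodule D K) :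
    (algebraMap K[X] (RatFunc K) X)⁻¹ ∉ polyExt D K E := by
  rintro ⟨p, -, hp⟩
  have hX : algebraMap K[X] (RatFunc K) X ≠ 0 := RatFunc.algebraMap_ne_zero X_ne_zero
  have hpX : X * p = 1 := RatFunc.algebraMap_injective K (by
    rw [map_mul, ← hp, mul_inv_cancel₀ hX, map_one])
  exact not_isUnit_X (IsUnit.of_mul_eq_one p hpX)

variable [IsFractionRing D K]

theorem algebraMap_polynomial_injective :
    Function.Injective (algebraMap D[X] (RatFunc K)) :=
  (RatFunc.algebraMap_injective K).comp (map_injective _ (IsFractionRing.injective D K))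

theorem algebraMap_surjective_of_smul_polyExt_top_le_one {d : D[X]} (hd : d ≠ 0)
    (hdA : ∀ a ∈ polyExt D K ⊤, d • a ∈ (1 : Submodule D[X] (RatFunc K))) :
    Function.Surjective (algebraMap D K) := by
  obtain ⟨n, hn⟩ : ∃ n, d.coeff n ≠ 0 := by
    by_contra! h
    exact hd (Polynomial.ext h)
  have hdn : algebraMap D K (d.coeff n) ≠ 0 :=
    (map_ne_zero_iff _ (IsFractionRing.injective D K)).mpr hn
  intro y
  have hmem := hdA _ ⟨C (y / algebraMap D K (d.coeff n)), fun _ => trivial, rfl⟩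
  rw [Algebra.smul_def, algebraMap_polynomial_apply, ← map_mul, ← polyExt_one] at hmem
  have hcoeff := coeff_mem_of_mem_polyExt hmem n
  rwa [coeff_mul_C, coeff_map, mul_div_cancel₀ _ hdn, Submodule.mem_one] at hcoeff

variable [IsDomain D]

theorem exists_mul_algebraMap_eq (z : RatFunc K) :
    ∃ f g : D[X], g ≠ 0 ∧ z * algebraMap D[X] (RatFunc K) g = algebraMap D[X] (RatFunc K) f := by
  obtain ⟨b, hbD, hb⟩ := IsLocalization.integerNormalization_spec (nonZeroDivisors D) z.num
  obtain ⟨c, -, hc⟩ := IsLocalization.integerNormalization_spec (nonZeroDivisors D) z.denom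
  set f := IsLocalization.integerNormalization (nonZeroDivisors D) z.num
  set g := IsLocalization.integerNormalization (nonZeroDivisors D) z.denom
  have hg : g ≠ 0 := fun h0 =>
    RatFunc.denom_ne_zero z (IsFractionRing.integerNormalization_eq_zero_iff.mp h0)
  refine ⟨C c * f, C b * g, mul_ne_zero (C_ne_zero.mpr (nonZeroDivisors.ne_zero hbD)) hg, ?_⟩
  have hz : z * algebraMap K[X] (RatFunc K) z.denom = algebraMap K[X] (RatFunc K) z.num :=
    (eq_div_iff (RatFunc.algebraMap_ne_zero (RatFunc.denom_ne_zero z))).mp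
      (RatFunc.num_div_denom z).symm
  simp only [algebraMap_polynomial_apply, map_C, hb, hc, Algebra.smul_def,
    Polynomial.algebraMap_apply, map_mul, ← hz]
  ring

theorem exists_ne_zero_mem_one_div_iff (A : Submodule D[X] (RatFunc K)) :
    (∃ z : RatFunc K, z ≠ 0 ∧ ∀ a ∈ A, z * a ∈ (1 : Submodule D[X] (RatFunc K))) ↔
      ∃ d : D[X], d ≠ 0 ∧ ∀ a ∈ A, d • a ∈ (1 : Submodule D[X] (RatFunc K)) := by
  constructor
  · rintro ⟨z, hz, hzA⟩
    obtain ⟨f, g, hg, hfg⟩ := exists_mul_algebraMap_eq (D := D) z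
    refine ⟨f, fun hf => ?_, fun a ha => ?_⟩
    · rw [hf, map_zero, mul_eq_zero] at hfg
      exact hfg.elim hz ((map_ne_zero_iff _ algebraMap_polynomial_injective).mpr hg)
    · rw [Algebra.smul_def, ← hfg, mul_comm z, mul_assoc, ← Algebra.smul_def]
      exact Submodule.smul_mem _ g (hzA a ha)
  · rintro ⟨d, hd, hdA⟩
    refine ⟨algebraMap D[X] (RatFunc K) d,
      (map_ne_zero_iff _ algebraMap_polynomial_injective).mpr hd, fun a ha => ?_⟩
    rw [← Algebra.smul_def]
    exact hdA a ha

theorem bigTriT_bot_vFun (A : Submodule D[X] (RatFunc K)) :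
    bigTriT D K (vFun D K) ⊥ A = vFun D[X] (RatFunc K) A := by
  by_cases h : ∃ d : D[X], d ≠ 0 ∧ ∀ a ∈ A, d • a ∈ (1 : Submodule D[X] (RatFunc K))
  · rw [vFun, if_pos h]
    exact le_antisymm (bigTriT_bot_vFun_le_one_div_one_div A)
      (one_div_one_div_le_bigTriT_bot_vFun A)
  · rw [vFun, if_neg h, bigTriT, if_neg]
    rw [polyExt_toSubmodule_bot]
    exact mt (exists_ne_zero_mem_one_div_iff A).mp h

theorem isField_of_bigTri_vFun_eq
    (h : bigTri D K (vFun D K) (polyExt D K ⊤) = vFun D[X] (RatFunc K) (polyExt D K ⊤)) :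
    IsField D := by
  rw [← IsFractionRing.surjective_iff_isField (K := K)]
  by_cases hc : ∃ d : D[X], d ≠ 0 ∧ ∀ a ∈ polyExt D K ⊤, d • a ∈ (1 : Submodule D[X] (RatFunc K))
  · obtain ⟨d, hd, hdA⟩ := hc
    exact algebraMap_surjective_of_smul_polyExt_top_le_one hd hdA
  · have hle := bigTriT_le_inv_smul (vFun D K) ⊤ (A := polyExt D K ⊤) one_ne_zero
      (fun a ha => by rwa [Algebra.top_toSubmodule, one_mul])
    rw [← bigTri, h, vFun, if_neg hc, inv_one, one_smul] at hle
    exact (inv_X_notMem_polyExt _ (hle trivial)).elim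

end PolynomialExtension

theorem bigTri_v_le_vPoly (D K : Type*) [CommRing D] [IsDomain D] [Field K] [Algebra D K] [IsFractionRing D K] :
    (∀ A : Submodule (Polynomial D) (RatFunc K), A ≠ ⊥ →
      bigTri D K (vFun D K) A ≤ bigTriT D K (vFun D K) ⊥ A) ∧
    (∀ A : Submodule (Polynomial D) (RatFunc K), A ≠ ⊥ →
      bigTriT D K (vFun D K) ⊥ A = vFun (Polynomial D) (RatFunc K) A) ∧
    ((∀ A : Submodule (Polynomial D) (RatFunc K), A ≠ ⊥ →
      bigTri D K (vFun D K) A = vFun (Polynomial D) (RatFunc K) A) ↔ IsField D) := by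
  refine ⟨fun A _ => bigTriT_antitone (vFun D K) bot_le A, fun A _ => bigTriT_bot_vFun A,
    fun h => isField_of_bigTri_vFun_eq (h _ polyExt_top_ne_bot), fun hD A _ => ?_⟩
  rw [bigTri, Algebra.surjective_algebraMap_iff.mp (IsFractionRing.surjective_iff_isField.mpr hD)]
  exact bigTriT_bot_vFun A
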